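/- (Claim 4, forward direction, labeling part 2) Let P be a popular matching leaving exactly U uncovered, P_Z ⊆ P as above, V' = Z ∪ P_Z(Z) ∪ U, and let D ⊆ Z be the set of 'dangerous' vertices: vertices z reachable in G'_{P_Z} on an alternating path from a blocking edge such that z is the far end of its matching edge on the path. Then every edge of G between D and V ∖ V' is labeled (−,−) with respect to P. -/

import Mathlib

/-- A roommates instance: a simple graph together with, for each vertex,
a ranking of vertices (lower rank = more preferred), injective on neighbors. -/
structure Roommates (V : Type*) where
  G : SimpleGraph V
  rank : V → V → ℕ
  rank_inj : ∀ u a b, G.Adj u a → G.Adj u b → rank u a = rank u b → a = b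

variable {V : Type*}

/-- `M` encodes a matching: `M u = some v` means `u` is matched to `v`. -/
def IsMatching (R : Roommates V) (M : V → Option V) : Prop :=
  ∀ u v, M u = some v → R.G.Adj u v ∧ M v = some u

/-- Vertex `v` prefers matching `M` to matching `M'`. -/
def Prefers (R : Roommates V) (M M' : V → Option V) (v : V) : Prop :=
  (∃ w, M v = some w ∧ M' v = none) ∨
  (∃ w w', M v = some w ∧ M' v = some w' ∧ R.rank v w < R.rank v w')

/-- `M` is popular: it never loses a head-to-head election. -/
def Popular [Fintype V] (R : Roommates V) (M : V → Option V) : Prop :=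
  ∀ M', IsMatching R M' →
    {v | Prefers R M' M v}.ncard ≤ {v | Prefers R M M' v}.ncard

/-- Edge `(u,v)` blocks `M`: each endpoint is unmatched or prefers the other
endpoint to its partner. -/
def Blocks (R : Roommates V) (M : V → Option V) (u v : V) : Prop :=
  R.G.Adj u v ∧ M u ≠ some v ∧
  (∀ w, M u = some w → R.rank u v < R.rank u w) ∧
  (∀ w, M v = some w → R.rank v u < R.rank v w)

def IsStable (R : Roommates V) (M : V → Option V) : Prop :=
  ∀ u v, ¬ Blocks R M u v

/-- `u` votes `+` for `v` against its situation in `M`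
(true when `u` is unmatched or prefers `v` to its `M`-partner). -/
def VotePlus (R : Roommates V) (M : V → Option V) (u v : V) : Prop :=
  ∀ w, M u = some w → R.rank u v < R.rank u w

/-- Non-matching edge of `G_M`, i.e. not labeled `(−,−)`. -/
def NonMatchEdge (R : Roommates V) (M : V → Option V) (u v : V) : Prop :=
  R.G.Adj u v ∧ M u ≠ some v ∧ (VotePlus R M u v ∨ VotePlus R M v u)

/-- `AltList A M b l`: the list of vertices `l` forms an alternating sequence,
whose first edge is a matching edge if `b = true` and an allowed (`A`)
non-matching edge if `b = false`. -/
def AltList (A : V → V → Prop) (M : V → Option V) : Bool → List V → Prop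
  | _, [] => True
  | _, [_] => True
  | true, u :: v :: rest => M u = some v ∧ AltList A M false (v :: rest)
  | false, u :: v :: rest => A u v ∧ AltList A M true (v :: rest)

/-- A matching of the subgraph induced on `W`. -/
def IsMatchingOn (R : Roommates V) (W : Set V) (M : V → Option V) : Prop :=
  IsMatching R M ∧ ∀ u v, M u = some v → u ∈ W ∧ v ∈ W

/-- Popularity within the subgraph induced on `W`. -/
def PopularOn (R : Roommates V) (W : Set V) (M : V → Option V) : Prop :=
  ∀ M', IsMatchingOn R W M' →
    {v | v ∈ W ∧ Prefers R M' M v}.ncard ≤ {v | v ∈ W ∧ Prefers R M M' v}.ncard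

/-- Stability within the subgraph induced on `W`. -/
def StableOn (R : Roommates V) (W : Set V) (M : V → Option V) : Prop :=
  ∀ u v, u ∈ W → v ∈ W → ¬ Blocks R M u v

/-!
Suppose an edge `z x` with `z ∈ D`, `x ∉ V'` is not labelled `(−,−)`. Since `P x ∉ Z ∪ U`, the
vertex `P x` has a neighbour `u ∈ U`. Appending `z − x − P x − u` to the alternating path from the
blocking edge to `z` (or only `z − x` if `u` is the start of that path) yields an alternating path
in `G_P` whose first edge is `(+,+)` and one of whose ends is unmatched by `P`. Switching `P` along
it orphans at most one vertex, and the resulting matching beats `P`.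
-/

/-- An edge of the graph `G_M` of the paper, i.e. an edge of `G` not labelled `(−,−)`. -/
def PlusEdge (R : Roommates V) (M : V → Option V) (a b : V) : Prop :=
  R.G.Adj a b ∧ (VotePlus R M a b ∨ VotePlus R M b a)

section Votes

variable {R : Roommates V}

theorem PlusEdge.symm {M : V → Option V} {a b : V} (h : PlusEdge R M a b) : PlusEdge R M b a :=
  ⟨h.1.symm, h.2.symm⟩

theorem votePlus_of_eq_none {M : V → Option V} {u v : V} (h : M u = none) : VotePlus R M u v := by
  intro w hw
  simp [h] at hw

theorem votePlus_congr {M M' : V → Option V} {u v : V} (h : M u = M' u) :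
    VotePlus R M u v ↔ VotePlus R M' u v := by
  simp only [VotePlus, h]

theorem not_prefers_of_eq {M M' : V → Option V} {v : V} (h : M v = M' v) :
    ¬ Prefers R M M' v := by
  rintro (⟨w, hw, hw'⟩ | ⟨w, w', hw, hw', hlt⟩)
  · simp [← h, hw] at hw'
  · rw [← h, hw, Option.some.injEq] at hw'
    exact (hw' ▸ hlt).false

theorem Prefers.not_prefers {M M' : V → Option V} {v : V} (h : Prefers R M M' v) :
    ¬ Prefers R M' M v := by
  rcases h with ⟨w, hw, hw'⟩ | ⟨w, w', hw, hw', hlt⟩ <;>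
    rintro (⟨u, hu, hu'⟩ | ⟨u, u', hu, hu', hlt'⟩) <;> simp_all
  exact lt_asymm hlt hlt'

theorem prefers_of_votePlus {M M' : V → Option V} {v w : V} (h : M' v = some w)
    (hv : VotePlus R M v w) : Prefers R M' M v := by
  cases hMv : M v with
  | none => exact Or.inl ⟨w, h, hMv⟩
  | some w₀ => exact Or.inr ⟨w, w₀, h, hMv, hv w₀ hMv⟩

theorem not_votePlus_of_prefers {M M' : V → Option V} {v w : V} (h : Prefers R M M' v)
    (hw : M' v = some w) : ¬ VotePlus R M v w := by
  intro hv
  exact Prefers.not_prefers (prefers_of_votePlus hw hv) h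

end Votes

section Switching

variable {R : Roommates V}

/-- `v ↦ M v` (and `v ↦ a` for the one `M`-unmatched `v`) injects the voters for `P` into the
voters for `M` other than `b`. -/
theorem ncard_prefers_lt [Fintype V] {P M : V → Option V} (hM : IsMatching R M) {a b : V}
    (hab : M a = some b) (ha : Prefers R M P a) (hb : Prefers R M P b)
    (hpartner : ∀ v w, Prefers R P M v → M v = some w → Prefers R M P w)
    (hunmatched : {v | Prefers R P M v ∧ M v = none}.Subsingleton) :
    {v | Prefers R P M v}.ncard < {v | Prefers R M P v}.ncard := by
  have hba : M b = some a := (hM a b hab).2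
  have hmaps : ∀ v ∈ {v | Prefers R P M v},
      (M v).getD a ∈ {v | Prefers R M P v} \ {b} := by
    intro v hv
    cases hv' : M v with
    | none => exact ⟨ha, (hM a b hab).1.ne⟩
    | some w =>
      refine ⟨hpartner v w hv hv', fun hwb => ?_⟩
      rw [Option.getD_some, Set.mem_singleton_iff] at hwb
      rw [hwb] at hv'
      have hva : v = a := Option.some.inj ((hM v b hv').2.symm.trans hba)
      exact ha.not_prefers (hva ▸ hv)
  have hinj : Set.InjOn (fun v => (M v).getD a) {v | Prefers R P M v} := by
    intro v₁ hv₁ v₂ hv₂ heq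
    cases h₁ : M v₁ <;> cases h₂ : M v₂ <;> simp only [h₁, h₂, Option.getD_none,
      Option.getD_some] at heq
    · exact hunmatched ⟨hv₁, h₁⟩ ⟨hv₂, h₂⟩
    · rw [← heq] at h₂
      have : v₂ = b := Option.some.inj ((hM v₂ a h₂).2.symm.trans hab)
      exact absurd (this ▸ hv₂) hb.not_prefers
    · rw [heq] at h₁
      have : v₁ = b := Option.some.inj ((hM v₁ a h₁).2.symm.trans hab)
      exact absurd (this ▸ hv₁) hb.not_prefers
    · subst heq
      exact Option.some.inj ((hM v₁ _ h₁).2.symm.trans (hM v₂ _ h₂).2)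
  calc {v | Prefers R P M v}.ncard ≤ ({v | Prefers R M P v} \ {b}).ncard :=
        Set.ncard_le_ncard_of_injOn _ hmaps hinj
    _ < {v | Prefers R M P v}.ncard := Set.ncard_sdiff_singleton_lt_of_mem hb

def augment (P N : V → Option V) (v : V) : Option V :=
  (N v).or ((P v).filter fun w => (N w).isNone)

theorem isMatching_augment {P N : V → Option V} (hP : IsMatching R P) (hN : IsMatching R N) :
    IsMatching R (augment P N) := by
  intro v w h
  cases hNv : N v with
  | some w' =>
    rw [augment, hNv, Option.some_or, Option.some.injEq] at h
    subst h
    exact ⟨(hN v w' hNv).1, by rw [augment, (hN v w' hNv).2, Option.some_or]⟩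
  | none =>
    rw [augment, hNv, Option.none_or, Option.filter_eq_some_iff] at h
    obtain ⟨hPv, hNw⟩ := h
    refine ⟨(hP v w hPv).1, ?_⟩
    rw [augment, Option.isNone_iff_eq_none.1 hNw, Option.none_or, (hP v w hPv).2]
    simp [hNv]

theorem ncard_prefers_augment_lt [Fintype V] {P N : V → Option V} (hP : IsMatching R P)
    (hN : IsMatching R N) (hvote : ∀ v w, N v = some w → VotePlus R P v w ∨ VotePlus R P w v)
    {a b : V} (hab : N a = some b) (ha : VotePlus R P a b) (hb : VotePlus R P b a)
    (horphan : {v | N v = none ∧ ∃ w, P v = some w ∧ N w ≠ none}.Subsingleton) :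
    {v | Prefers R P (augment P N) v}.ncard < {v | Prefers R (augment P N) P v}.ncard := by
  have hsome : ∀ {v w}, N v = some w → augment P N v = some w := fun h => by
    rw [augment, h, Option.some_or]
  refine ncard_prefers_lt (isMatching_augment hP hN) (hsome hab)
    (prefers_of_votePlus (hsome hab) ha) (prefers_of_votePlus (hsome (hN a b hab).2) hb)
    ?_ (horphan.anti ?_)
  · intro v w hv hvw
    cases hNv : N v with
    | some w' =>
      obtain rfl : w' = w := Option.some.inj ((hsome hNv).symm.trans hvw)
      have hwv := (hvote v w' hNv).resolve_left (not_votePlus_of_prefers hv hvw)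
      exact prefers_of_votePlus (hsome (hN v w' hNv).2) hwv
    | none =>
      rw [augment, hNv, Option.none_or, Option.filter_eq_some_iff] at hvw
      refine absurd hv (not_prefers_of_eq ?_)
      rw [augment, hNv, Option.none_or, hvw.1]
      simp [Option.filter, hvw.2]
  · rintro v ⟨hv, hvnone⟩
    have hNv : N v = none := by
      cases h : N v
      · rfl
      · simp [hsome h] at hvnone
    obtain ⟨w, hPv, -⟩ : ∃ w, P v = some w ∧ augment P N v = none := by
      rcases hv with h | ⟨w, _, _, h, _⟩
      · exact h
      · simp [hvnone] at h
    refine ⟨hNv, w, hPv, fun hNw => ?_⟩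
    rw [augment, hNv, Option.none_or, hPv] at hvnone
    simp [hNw] at hvnone

end Switching

section AlternatingLists

variable {R : Roommates V} {A A' : V → V → Prop} {M M' : V → Option V}

theorem AltList.mono (hA : ∀ a b, A a b → A' a b) (hM : ∀ a b, M a = some b → M' a = some b) :
    ∀ {β : Bool} {l : List V}, AltList A M β l → AltList A' M' β l
  | _, [], _ => trivial
  | _, [_], _ => trivial
  | true, _ :: _ :: _, h => ⟨hM _ _ h.1, AltList.mono hA hM h.2⟩
  | false, _ :: _ :: _, h => ⟨hA _ _ h.1, AltList.mono hA hM h.2⟩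

theorem AltList.forall_mem {p : V → Prop} (hA : ∀ a b, A a b → p a ∧ p b)
    (hM : ∀ a b, M a = some b → p a ∧ p b) :
    ∀ {β : Bool} {a b : V} {l : List V}, AltList A M β (a :: b :: l) → ∀ v ∈ a :: b :: l, p v
  | β, a, b, l, h => by
    have hab : p a ∧ p b := by
      cases β
      · exact hA a b h.1
      · exact hM a b h.1
    intro v hv
    rcases List.mem_cons.1 hv with rfl | hv
    · exact hab.1
    match l, h with
    | [], _ => exact List.mem_singleton.1 hv ▸ hab.2
    | c :: l, h =>
      have htail : AltList A M (!β) (b :: c :: l) := by cases β <;> exact h.2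
      exact AltList.forall_mem hA hM htail v hv

theorem AltList.cons_cons {a b : V} {l : List V} (h : AltList A M false (a :: b :: l)) :
    A a b ∧ AltList A M false l := by
  match l, h with
  | [], h => exact ⟨h.1, trivial⟩
  | _ :: _, h => exact ⟨h.1, h.2.2⟩

theorem AltList.append_of_odd {z v : V} {l' : List V} :
    ∀ {l : List V}, AltList A M false l → Odd l.length → l.getLast? = some z → A z v →
      AltList A M true (v :: l') → AltList A M false (l ++ v :: l')
  | [], _, hodd, _, _, _ => by simp at hodd
  | [_], _, _, hz, hzv, hv => by
    rw [List.getLast?_singleton, Option.some.injEq] at hz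
    exact hz ▸ ⟨hzv, hv⟩
  | [_, _], _, hodd, _, _, _ => by simp [Nat.odd_iff] at hodd
  | _ :: _ :: c :: l, h, hodd, hz, hzv, hv =>
    ⟨h.1, h.2.1, AltList.append_of_odd h.2.2
      (by simpa [Nat.odd_add_one] using hodd) (by simpa using hz) hzv hv⟩

theorem AltList.exists_partner_mem (hM : IsMatching R M) :
    ∀ {β : Bool} {u v : V} {l : List V}, AltList A M β (u :: l) → v ∈ l →
      (u :: l).getLast? ≠ some v → ∃ w ∈ u :: l, M v = some w
  | _, _, _, [], _, hv, _ => absurd hv List.not_mem_nil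
  | β, u, v, v₁ :: l, h, hv, hlast => by
    have htail : AltList A M (!β) (v₁ :: l) := by cases β <;> exact h.2
    by_cases hvv₁ : v = v₁
    · subst hvv₁
      cases β
      · match l, h with
        | [], _ => simp at hlast
        | v₂ :: _, h => exact ⟨v₂, by simp, h.2.1⟩
      · exact ⟨u, by simp, (hM u v h.1).2⟩
    · have hvl : v ∈ l := (List.mem_cons.1 hv).resolve_left hvv₁
      obtain ⟨w, hw, hMv⟩ := AltList.exists_partner_mem hM htail hvl
        (by rwa [List.getLast?_cons_cons] at hlast)
      exact ⟨w, List.mem_cons_of_mem u hw, hMv⟩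

end AlternatingLists

section Pairing

variable [DecidableEq V] {A : V → V → Prop} {M : V → Option V}

def pairUp : List V → V → Option V
  | a :: b :: l, v => if v = a then some b else if v = b then some a else pairUp l v
  | _, _ => none

theorem pairUp_cons_cons_self (a b : V) (l : List V) : pairUp (a :: b :: l) a = some b := by
  simp [pairUp]

theorem mem_of_pairUp_eq_some {v w : V} : ∀ {l : List V}, pairUp l v = some w → v ∈ l ∧ w ∈ l
  | [], h | [_], h => by simp [pairUp] at h
  | a :: b :: l, h => by
    unfold pairUp at h
    split_ifs at h with hva hvb
    · simp_all
    · simp_all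
    · have := mem_of_pairUp_eq_some h
      simp [this]

theorem pairUp_ne_none_of_mem {v : V} : ∀ {l : List V}, Even l.length → v ∈ l → pairUp l v ≠ none
  | [], _, hv => absurd hv List.not_mem_nil
  | [_], heven, _ => by simp at heven
  | a :: b :: l, heven, hv => by
    unfold pairUp
    split_ifs with hva hvb
    · simp
    · simp
    · refine pairUp_ne_none_of_mem (by simpa [Nat.even_add_one] using heven) ?_
      simpa [hva, hvb] using hv

theorem pairUp_eq_some {v w : V} : ∀ {l : List V}, l.Nodup → AltList A M false l →
    pairUp l v = some w → pairUp l w = some v ∧ (A v w ∨ A w v)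
  | [], _, _, h | [_], _, _, h => by simp [pairUp] at h
  | a :: b :: l, hnd, halt, h => by
    obtain ⟨hab, halt'⟩ := halt.cons_cons
    simp only [List.nodup_cons, List.mem_cons, not_or] at hnd
    obtain ⟨⟨hab', hal⟩, hbl, hnd'⟩ := hnd
    unfold pairUp at h ⊢
    split_ifs at h with hva hvb
    · subst hva; cases h
      simp [Ne.symm hab', hab]
    · subst hvb; cases h
      simp [hab]
    · obtain ⟨hwl, hvw⟩ := pairUp_eq_some hnd' halt' h
      have hw := (mem_of_pairUp_eq_some h).2
      have hwa : w ≠ a := fun e => hal (e ▸ hw)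
      have hwb : w ≠ b := fun e => hbl (e ▸ hw)
      simp [hwa, hwb, hwl, hvw]

end Pairing

section AlternatingPaths

variable [Fintype V] {R : Roommates V} {P : V → Option V}

theorem not_popular_of_alternatingPath [DecidableEq V] (hP : IsMatching R P) {a b e : V}
    {l : List V} (hnd : (a :: b :: l).Nodup) (heven : Even (a :: b :: l).length)
    (halt : AltList (PlusEdge R P) P false (a :: b :: l))
    (hab : VotePlus R P a b) (hba : VotePlus R P b a)
    (hlast : (a :: b :: l).getLast? = some e) (hend : P a = none ∨ P e = none) :
    ¬ Popular R P := by
  set N := pairUp (a :: b :: l)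
  have hN : IsMatching R N := fun v w h =>
    have hvw := pairUp_eq_some hnd halt h
    ⟨(hvw.2.elim id PlusEdge.symm).1, hvw.1⟩
  have hvote : ∀ v w, N v = some w → VotePlus R P v w ∨ VotePlus R P w v := fun v w h =>
    ((pairUp_eq_some hnd halt h).2.elim id PlusEdge.symm).2
  have hends : ∀ v w, N v = none → P v = some w → N w ≠ none → P a = some v ∨ P e = some v := by
    intro v w hNv hPv hNw
    have hvl : v ∉ a :: b :: l := fun hv => pairUp_ne_none_of_mem heven hv hNv
    have hPw : P w = some v := (hP v w hPv).2
    obtain ⟨w', hw'⟩ := Option.ne_none_iff_exists'.1 hNw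
    have hwl := (mem_of_pairUp_eq_some hw').1
    by_cases hwa : w = a
    · exact Or.inl (hwa ▸ hPw)
    by_cases hwe : w = e
    · exact Or.inr (hwe ▸ hPw)
    obtain ⟨v', hv', hPw'⟩ := halt.exists_partner_mem hP ((List.mem_cons.1 hwl).resolve_left hwa)
      (by rw [hlast]; exact fun h => hwe (Option.some.inj h).symm)
    exact absurd (Option.some.inj (hPw.symm.trans hPw') ▸ hv') hvl
  have horphan : {v | N v = none ∧ ∃ w, P v = some w ∧ N w ≠ none}.Subsingleton := by
    rintro v₁ ⟨hN₁, w₁, hP₁, hw₁⟩ v₂ ⟨hN₂, w₂, hP₂, hw₂⟩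
    have h₁ := hends v₁ w₁ hN₁ hP₁ hw₁
    have h₂ := hends v₂ w₂ hN₂ hP₂ hw₂
    rcases hend with h | h <;> simp only [h, reduceCtorEq, false_or, or_false] at h₁ h₂ <;>
      exact Option.some.inj (h₁.symm.trans h₂)
  intro hpop
  have := ncard_prefers_augment_lt hP hN hvote (pairUp_cons_cons_self a b l) hab hba horphan
  exact this.not_ge (hpop _ (isMatching_augment hP hN))

end AlternatingPaths

theorem not_plusEdge_of_popular [Fintype V] {R : Roommates V} {P : V → Option V}
    (hP : IsMatching R P) (hpop : Popular R P) {x₀ y₀ z x px u : V} {l : List V}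
    (hnd : (x₀ :: y₀ :: l).Nodup) (hodd : Odd (x₀ :: y₀ :: l).length)
    (hlast : (x₀ :: y₀ :: l).getLast? = some z)
    (halt : AltList (PlusEdge R P) P false (x₀ :: y₀ :: l))
    (hxy : VotePlus R P x₀ y₀) (hyx : VotePlus R P y₀ x₀)
    (hx : x ∉ x₀ :: y₀ :: l) (hpx : P x = some px) (hpxl : px ∉ x₀ :: y₀ :: l)
    (hu : P u = none) (hpxu : R.G.Adj px u) : ¬ PlusEdge R P z x := by
  classical
  intro hzx
  have hext : AltList (PlusEdge R P) P false (x₀ :: y₀ :: l ++ [x]) :=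
    halt.append_of_odd (l' := []) hodd hlast hzx trivial
  have hux : u ≠ x := fun h => by simp [h, hpx] at hu
  by_cases hux₀ : u = x₀
  · refine not_popular_of_alternatingPath (l := l ++ [x]) hP
      (List.nodup_append.2 ⟨hnd, by simp, ?_⟩) (by simpa using hodd.add_one) hext hxy hyx
      (List.getLast?_concat (l := x₀ :: y₀ :: l))
      (Or.inl (hux₀ ▸ hu)) hpop
    rintro v hv w hw rfl
    exact hx (List.mem_singleton.1 hw ▸ hv)
  · have hul : u ∉ x₀ :: y₀ :: l := by
      intro hul
      obtain ⟨w, -, hw⟩ := hext.exists_partner_mem hP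
        (List.mem_append_left _ ((List.mem_cons.1 hul).resolve_left hux₀))
        (by simpa [List.getLast?_cons] using hux.symm)
      simp [hw] at hu
    have hpath : AltList (PlusEdge R P) P false (x₀ :: y₀ :: l ++ [x, px, u]) :=
      halt.append_of_odd hodd hlast hzx ⟨hpx, ⟨hpxu, Or.inr (votePlus_of_eq_none hu)⟩, trivial⟩
    refine not_popular_of_alternatingPath (l := l ++ [x, px, u]) hP
      (List.nodup_append.2 ⟨hnd, ?_, ?_⟩) (by simpa using hodd.add_odd (by decide : Odd 3))
      hpath hxy hyx (by simp [List.getLast?_cons, List.getLast?_append]) (Or.inr hu) hpop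
    · have hupx : u ≠ px := fun h => by simp [h, (hP x px hpx).2] at hu
      simp [(hP x px hpx).1.ne, hux.symm, hupx.symm]
    · intro v hv w hw hvw
      simp only [List.mem_cons, List.not_mem_nil, or_false] at hw
      rcases hw with rfl | rfl | rfl <;> subst hvw
      exacts [hx hv, hpxl hv, hul hv]

section Cover

variable {R : Roommates V} {P PZ : V → Option V} {Z U : Set V}

theorem mem_cover_of_eq_some (hPZ : IsMatching R PZ)
    (hmeet : ∀ u v, PZ u = some v → u ∈ Z ∨ v ∈ Z) {v w : V} (h : PZ v = some w) :
    v ∈ Z ∪ {y | ∃ z ∈ Z, PZ z = some y} ∪ U := by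
  rcases hmeet v w h with hv | hw
  · exact Or.inl (Or.inl hv)
  · exact Or.inl (Or.inr ⟨w, hw, (hPZ v w h).2⟩)

theorem eq_of_mem_cover (hPZ : IsMatching R PZ) (hsub : ∀ u v, PZ u = some v → P u = some v)
    (hcov : ∀ z ∈ Z, ∃ y, PZ z = some y) (hU : ∀ v, P v = none ↔ v ∈ U) {v : V}
    (hv : v ∈ Z ∪ {y | ∃ z ∈ Z, PZ z = some y} ∪ U) : P v = PZ v := by
  rcases hv with (hv | ⟨w, -, hw⟩) | hv
  · obtain ⟨w, hw⟩ := hcov v hv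
    rw [hw, hsub v w hw]
  · rw [(hPZ w v hw).2, hsub v w (hPZ w v hw).2]
  · cases hPZv : PZ v with
    | none => exact (hU v).2 hv
    | some w => exact absurd ((hU v).2 hv) (by simp [hsub v w hPZv])

end Cover

/-- Claim 4, forward direction, labeling part 2: with `D ⊆ Z` the
set of "dangerous" vertices (reachable in `G'_{P_Z}` on an alternating path from
a blocking edge, as far end of a matching edge), every edge of `G` between `D`
and `V ∖ V'` is labeled `(−,−)` with respect to `P`. -/
theorem claim4_label2 {V : Type*} [Fintype V] (R : Roommates V)
    (P : V → Option V) (hP : IsMatching R P) (hpop : Popular R P)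
    (U : Set V) (hU : ∀ v, P v = none ↔ v ∈ U)
    (Z : Set V) (hZ : Z = {w | w ∉ U ∧ ∀ x ∈ U, ¬ R.G.Adj w x})
    (PZ : V → Option V) (hPZ : IsMatching R PZ)
    (hsub : ∀ u v, PZ u = some v → P u = some v)
    (hcov : ∀ z ∈ Z, ∃ y, PZ z = some y)
    (hmeet : ∀ u v, PZ u = some v → u ∈ Z ∨ v ∈ Z)
    (V' : Set V) (hV' : V' = Z ∪ {y | ∃ z ∈ Z, PZ z = some y} ∪ U)
    (D : Set V)
    (hD : D = {z | ∃ (l : List V) (x y : V) (t : List V),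
      l = x :: y :: t ∧ x ∈ V' ∧ y ∈ V' ∧ Blocks R PZ x y ∧
      AltList (fun a b => a ∈ V' ∧ b ∈ V' ∧ NonMatchEdge R PZ a b) PZ false l ∧
      l.Nodup ∧ Odd l.length ∧ l.getLast? = some z}) :
    ∀ z ∈ D, ∀ x, x ∉ V' → R.G.Adj z x →
      ¬ VotePlus R P z x ∧ ¬ VotePlus R P x z := by
  subst hD
  rintro z ⟨_, x₀, y₀, t, rfl, hx₀, hy₀, ⟨-, -, hxy, hyx⟩, halt, hnd, hodd, hlast⟩ x hxV' hzx
  have hcover : ∀ {v w}, PZ v = some w → v ∈ V' := fun h => hV' ▸ mem_cover_of_eq_some hPZ hmeet h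
  have hagree : ∀ v ∈ V', P v = PZ v := fun v hv =>
    eq_of_mem_cover hPZ hsub hcov hU (hV' ▸ hv)
  have hl := halt.forall_mem (fun a b h => ⟨h.1, h.2.1⟩)
    (fun a b h => ⟨hcover h, hcover (hPZ a b h).2⟩)
  have haltP : AltList (PlusEdge R P) P false (x₀ :: y₀ :: t) :=
    halt.mono (fun a b ⟨ha, hb, hab, _, hvote⟩ => ⟨hab, by
      rwa [votePlus_congr (hagree a ha), votePlus_congr (hagree b hb)]⟩) hsub
  obtain ⟨px, hpx⟩ : ∃ px, P x = some px :=
    Option.ne_none_iff_exists'.1 fun h => hxV' (by rw [hV']; exact Or.inr ((hU x).1 h))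
  have hpxx : P px = some x := (hP x px hpx).2
  have hpxV' : px ∉ V' := fun h => hxV' (hcover (hPZ px x ((hagree px h).symm.trans hpxx)).2)
  obtain ⟨u, hu, hpxu⟩ : ∃ u ∈ U, R.G.Adj px u := by
    have hpxU : px ∉ U := fun h => by simp [(hU px).2 h] at hpxx
    have hpxZ : px ∉ Z := fun h => hpxV' (by rw [hV']; exact Or.inl (Or.inl h))
    rw [hZ] at hpxZ
    simpa [hpxU] using hpxZ
  have := not_plusEdge_of_popular hP hpop hnd hodd hlast haltP
    ((votePlus_congr (hagree x₀ hx₀)).2 hxy) ((votePlus_congr (hagree y₀ hy₀)).2 hyx)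
    (fun h => hxV' (hl x h)) hpx (fun h => hpxV' (hl px h)) ((hU u).2 hu) hpxu
  simpa [PlusEdge, hzx, not_or] using this
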